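/- Let V(x) = (1 + |x|²)^{s/2} with s ≥ 1, let Φ : ℝ^d×[0,T]×ℝ → ℝ be a Borel function such that for every t ∈ [0,T] the map (x,r) ↦ Φ(x,t,r) is continuous, let ζ : ℝ^d → ℝ be continuous with ζ(x)/V(x) → 0 as |x| → ∞, and for μ ∈ M(V) define φ(x,t,μ) = Φ(x, t, ∫_0^T ∫ ζ(y) μ_τ(dy) dτ). Let R > 0. If measures μⁿ = μⁿ_t dt ∈ M_R(V) converge V-weakly to a measure μ = μ_t dt ∈ M_R(V), then for every t ∈ [0,T] and every open ball B ⊆ ℝ^d: lim_{n→∞} sup_{x∈B} |φ(x,t,μⁿ) − φ(x,t,μ)| = 0. -/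

import Mathlib

open MeasureTheory Filter Topology Set

noncomputable section

namespace MFG

/-- Points of `ℝ^d`. -/
abbrev Rd (d : ℕ) := Fin d → ℝ

/-- A curve of measures `t ↦ μ_t` on `ℝ^d`. -/
abbrev Curve (d : ℕ) := ℝ → Measure (Rd d)

/-- Euclidean inner product. -/
def dotp {n : ℕ} (a b : Rd n) : ℝ := ∑ i, a i * b i

/-- Euclidean norm of a vector. -/
def enorm' {n : ℕ} (v : Rd n) : ℝ := Real.sqrt (∑ i, (v i) ^ 2)

/-- Frobenius norm of a matrix. -/
def fnorm {n m : ℕ} (M : Matrix (Fin n) (Fin m) ℝ) : ℝ :=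
  Real.sqrt (∑ i, ∑ j, (M i j) ^ 2)

/-- Gradient of a function on `ℝ^d`. -/
def grad {n : ℕ} (ψ : Rd n → ℝ) (x : Rd n) : Rd n :=
  fun i => fderiv ℝ ψ x (Pi.single i 1)

/-- Hessian matrix of a function on `ℝ^d`. -/
def hess {n : ℕ} (ψ : Rd n → ℝ) (x : Rd n) : Matrix (Fin n) (Fin n) ℝ :=
  Matrix.of fun i j => fderiv ℝ (fun y => fderiv ℝ ψ y (Pi.single j 1)) x (Pi.single i 1)

/-- Test functions: `ψ ∈ C_0^∞(ℝ^d)`. -/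
def IsTest {n : ℕ} (ψ : Rd n → ℝ) : Prop := ContDiff ℝ (⊤ : ℕ∞) ψ ∧ HasCompactSupport ψ

/-- Legendre transform `h*(v) = sup_{p ≥ 0} (p v - h p)`. -/
def legendre (hfun : ℝ → ℝ) (v : ℝ) : ℝ := ⨆ p : Ici (0:ℝ), ((p : ℝ) * v - hfun (p : ℝ))

/-- The inverse function of an increasing function `h : [0,∞) → [0,∞)`. -/
def hinv (hfun : ℝ → ℝ) (y : ℝ) : ℝ := sInf {v : ℝ | 0 ≤ v ∧ y ≤ hfun v}

variable {d d₁ : ℕ}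

/-- A family `(μ_t)_{t ∈ [0,T]}` of Borel probability measures, Borel in `t` and
continuous with respect to the weak topology. -/
def IsMeasCurve (T : ℝ) (μ : Curve d) : Prop :=
  (∀ t ∈ Icc (0:ℝ) T, IsProbabilityMeasure (μ t)) ∧
  (∀ E : Set (Rd d), MeasurableSet E → Measurable fun t => μ t E) ∧
  (∀ φ : Rd d → ℝ, Continuous φ → (∃ K, ∀ x, |φ x| ≤ K) →
      ContinuousOn (fun t => ∫ x, φ x ∂ μ t) (Icc (0:ℝ) T))

/-- The class `M(V)`. -/
def MemMV (T : ℝ) (V : Rd d → ℝ) (μ : Curve d) : Prop :=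
  IsMeasCurve T μ ∧ (∀ t ∈ Icc (0:ℝ) T, Integrable V (μ t)) ∧
    ∃ C : ℝ, ∀ t ∈ Icc (0:ℝ) T, ∫ x, V x ∂ μ t ≤ C

/-- The class `M_{R,M}(V)`. -/
def MemMRM (T : ℝ) (V : Rd d → ℝ) (R M : ℝ) (μ : Curve d) : Prop :=
  MemMV T V μ ∧ ∀ t ∈ Icc (0:ℝ) T, ∫ x, V x ∂ μ t ≤ R * Real.exp (M * t)

/-- `sup_{t ∈ [0,T]} ∫ W dμ_t`. -/
def supInt (T : ℝ) (W : Rd d → ℝ) (μ : Curve d) : ℝ :=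
  ⨆ t : Icc (0:ℝ) T, ∫ x, W x ∂ μ (t : ℝ)

/-- `V`-weak convergence of a sequence of curves of measures. -/
def VWeakConv (T : ℝ) (V : Rd d → ℝ) (μn : ℕ → Curve d) (μ : Curve d) : Prop :=
  ∀ t ∈ Icc (0:ℝ) T, ∀ ζ : Rd d → ℝ, Continuous ζ →
    Tendsto (fun x => ζ x / V x) (cocompact (Rd d)) (𝓝 0) →
    Tendsto (fun n => ∫ x, ζ x ∂ (μn n t)) atTop (𝓝 (∫ x, ζ x ∂ μ t))

/-- Weak convergence of a sequence of bounded measures: convergence of the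
integrals of all bounded continuous functions. -/
def WeakLim {α : Type*} [TopologicalSpace α] [MeasurableSpace α]
    (Pn : ℕ → Measure α) (P : Measure α) : Prop :=
  ∀ φ : α → ℝ, Continuous φ → (∃ K, ∀ a, |φ a| ≤ K) →
    Tendsto (fun n => ∫ a, φ a ∂ (Pn n)) atTop (𝓝 (∫ a, φ a ∂ P))

/-- The measure `μ_t dt` on `ℝ^d × [0,T]` associated with a curve `t ↦ μ_t`. -/
def curveMeasure (T : ℝ) (μ : Curve d) : Measure (Rd d × ℝ) :=
  Measure.bind (volume.restrict (Icc (0:ℝ) T)) (fun t => (μ t).map (fun x => (x, t)))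

/-- A family `ω = {ω_ψ}` of moduli of continuity indexed by test functions. -/
def IsModulus (T : ℝ) (Ω : (Rd d → ℝ) → ℝ → ℝ) : Prop :=
  ∀ ψ : Rd d → ℝ, IsTest ψ →
    ContinuousOn (Ω ψ) (Icc (0:ℝ) T) ∧ MonotoneOn (Ω ψ) (Icc (0:ℝ) T) ∧ Ω ψ 0 = 0

/-- The class `M_{R,M}^ω(V)`. -/
def MemMRMom (T : ℝ) (V : Rd d → ℝ) (R M : ℝ) (Ω : (Rd d → ℝ) → ℝ → ℝ) (μ : Curve d) : Prop :=
  MemMRM T V R M μ ∧ ∀ ψ : Rd d → ℝ, IsTest ψ → ∀ s ∈ Icc (0:ℝ) T, ∀ t ∈ Icc (0:ℝ) T,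
    |(∫ x, ψ x ∂ μ t) - ∫ x, ψ x ∂ μ s| ≤ Ω ψ |t - s|

/-- The coefficients `A(x,t,μ)`, `b(x,t,μ)`, `Q(x,t,μ)` of the mean field game,
given for every curve of measures `μ`. -/
structure Coeffs (d d₁ : ℕ) where
  A : Rd d → ℝ → Curve d → Matrix (Fin d) (Fin d) ℝ
  b : Rd d → ℝ → Curve d → Rd d
  Q : Rd d → ℝ → Curve d → Matrix (Fin d) (Fin d₁) ℝ

/-- The operator `L_μ ψ(x,t) = tr(A(x,t,μ) D²ψ(x)) + ⟨b(x,t,μ), ∇ψ(x)⟩`. -/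
def Lop (c : Coeffs d d₁) (σ : Curve d) (ψ : Rd d → ℝ) (x : Rd d) (t : ℝ) : ℝ :=
  Matrix.trace (c.A x t σ * hess ψ x) + dotp (c.b x t σ) (grad ψ x)

/-- The operator `L_{μ,u} ψ = L_μ ψ + ⟨Q(x,t,μ) u, ∇ψ(x)⟩`. -/
def LopU (c : Coeffs d d₁) (σ : Curve d) (u : Rd d₁) (ψ : Rd d → ℝ) (x : Rd d) (t : ℝ) : ℝ :=
  Lop c σ ψ x t + dotp ((c.Q x t σ).mulVec u) (grad ψ x)

/-- The basic data of the mean field game: the time horizon `T`, the Lyapunov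
function `V`, the function `W`, the cost gauge `h` and the control set `U`. -/
structure Setting (d d₁ : ℕ) where
  T : ℝ
  V : Rd d → ℝ
  W : Rd d → ℝ
  hf : ℝ → ℝ
  U : Set (Rd d₁)
  hT : 0 < T
  hVC2 : ContDiff ℝ 2 V
  hV0 : ∀ x, 0 ≤ V x
  hVinf : Tendsto V (cocompact (Rd d)) atTop
  hWcont : Continuous W
  hW0 : ∀ x, 0 ≤ W x
  hWV : ∀ x, W x ≤ V x
  hWlim : Tendsto (fun x => W x / V x) (cocompact (Rd d)) (𝓝 0)
  hh0 : hf 0 = 0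
  hhconv : ConvexOn ℝ (Ici (0:ℝ)) hf
  hhmono : StrictMonoOn hf (Ici (0:ℝ))
  hhcont : ContinuousOn hf (Ici (0:ℝ))
  hhsuper : Tendsto (fun v => hf v / v) atTop atTop
  hUne : U.Nonempty
  hUclosed : IsClosed U
  hUconv : Convex ℝ U

/-- Condition (H1.1): local boundedness of the coefficients, uniformly over `M_R(V)`. -/
def H11 (S : Setting d d₁) (c : Coeffs d d₁) : Prop :=
  ∀ (x₀ : Rd d) (r : ℝ), ∀ R > (0:ℝ), ∃ K : ℝ,
    ∀ x ∈ Metric.ball x₀ r, ∀ t ∈ Icc (0:ℝ) S.T, ∀ μ : Curve d, MemMRM S.T S.V R 0 μ →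
      (∀ i j, |c.A x t μ i j| ≤ K) ∧ (∀ i, |c.b x t μ i| ≤ K) ∧ (∀ i m, |c.Q x t μ i m| ≤ K)

/-- Condition (H1.2): continuity of the coefficients in `x`. -/
def H12 (S : Setting d d₁) (c : Coeffs d d₁) : Prop :=
  ∀ μ : Curve d, MemMV S.T S.V μ → ∀ t ∈ Icc (0:ℝ) S.T,
    (∀ i j, Continuous fun x => c.A x t μ i j) ∧
    (∀ i, Continuous fun x => c.b x t μ i) ∧
    (∀ i m, Continuous fun x => c.Q x t μ i m)

/-- The coefficients are Borel functions of `(x,t)`. -/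
def HMeasCoeffs (S : Setting d d₁) (c : Coeffs d d₁) : Prop :=
  ∀ μ : Curve d, MemMV S.T S.V μ →
    (∀ i j, Measurable fun p : Rd d × ℝ => c.A p.1 p.2 μ i j) ∧
    (∀ i, Measurable fun p : Rd d × ℝ => c.b p.1 p.2 μ i) ∧
    (∀ i m, Measurable fun p : Rd d × ℝ => c.Q p.1 p.2 μ i m)

/-- Condition (H1.3): uniform-on-balls continuity of the coefficients with respect to
`V`-weak convergence. -/
def H13 (S : Setting d d₁) (c : Coeffs d d₁) : Prop :=
  ∀ (x₀ : Rd d) (r : ℝ), ∀ t ∈ Icc (0:ℝ) S.T, ∀ R > (0:ℝ),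
    ∀ (μn : ℕ → Curve d) (μ : Curve d),
      (∀ n, MemMRM S.T S.V R 0 (μn n)) → MemMRM S.T S.V R 0 μ → VWeakConv S.T S.V μn μ →
      ∀ ε > (0:ℝ), ∃ N : ℕ, ∀ n ≥ N, ∀ x ∈ Metric.ball x₀ r,
        (∀ i j, |c.A x t (μn n) i j - c.A x t μ i j| < ε) ∧
        (∀ i, |c.b x t (μn n) i - c.b x t μ i| < ε) ∧
        (∀ i m, |c.Q x t (μn n) i m - c.Q x t μ i m| < ε)

/-- Condition (H1). -/
def H1 (S : Setting d d₁) (c : Coeffs d d₁) : Prop :=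
  H11 S c ∧ H12 S c ∧ H13 S c ∧ HMeasCoeffs S c

/-- Condition (H2.1): the Lyapunov estimate with constant `C_L`. -/
def H21 (S : Setting d d₁) (c : Coeffs d d₁) (CL : ℝ) : Prop :=
  0 < CL ∧ ∀ μ : Curve d, MemMV S.T S.V μ → ∀ x : Rd d, ∀ t ∈ Icc (0:ℝ) S.T,
    Lop c μ S.V x t + legendre S.hf (enorm' ((c.Q x t μ).transpose.mulVec (grad S.V x)))
      ≤ CL * S.V x + CL * (∫ y, S.V y ∂ μ t) + CL * supInt S.T S.W μ

/-- The positive semidefinite square root of a positive semidefinite matrix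
(as `Matrix.PosSemidef.sqrt` was defined in Mathlib, December 2024). -/
def _root_.Matrix.PosSemidef.sqrt {n : Type*} [Fintype n] [DecidableEq n]
    {A : Matrix n n ℝ} (hA : A.PosSemidef) : Matrix n n ℝ :=
  hA.1.eigenvectorUnitary.1 * Matrix.diagonal ((↑) ∘ (Real.sqrt ·) ∘ hA.1.eigenvalues) *
    (star hA.1.eigenvectorUnitary : Matrix n n ℝ)

/-- Conditions (H2.2) and (H2.3): monotonicity/Lipschitz-type bounds and `V`-growth
bounds on `A`, `b`, `Q` and `Θ`. -/
def H2b (S : Setting d d₁) (c : Coeffs d d₁)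
    (hApsd : ∀ (x : Rd d) (t : ℝ) (μ : Curve d), (c.A x t μ).PosSemidef) : Prop :=
  ∀ μ : Curve d, MemMV S.T S.V μ → ∃ C₁ > (0:ℝ), ∃ C₂ > (0:ℝ), ∃ Θ : Rd d → ℝ → ℝ,
    (∀ x t, 0 ≤ Θ x t) ∧ (Measurable fun p : Rd d × ℝ => Θ p.1 p.2) ∧
    (∀ x y : Rd d, ∀ t ∈ Icc (0:ℝ) S.T,
      Matrix.trace (((hApsd x t μ).sqrt - (hApsd y t μ).sqrt) *
          ((hApsd x t μ).sqrt - (hApsd y t μ).sqrt)) + dotp (c.b x t μ - c.b y t μ) (x - y)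
        ≤ C₁ * (1 + S.V x + S.V y) * (enorm' (x - y)) ^ 2) ∧
    (∀ x y : Rd d, ∀ t ∈ Icc (0:ℝ) S.T,
      fnorm (c.Q x t μ - c.Q y t μ) ≤ (Θ x t + Θ y t) * enorm' (x - y)) ∧
    (∀ x : Rd d, ∀ t ∈ Icc (0:ℝ) S.T,
      fnorm (c.A x t μ) + enorm' (c.b x t μ) + legendre S.hf (fnorm (c.Q x t μ)) +
          legendre S.hf (Θ x t) ≤ C₂ * S.V x)

/-- Condition (H3.1): continuity and growth of `g`, with constant `C_g`. -/
def H31 (S : Setting d d₁) (g : Rd d → Curve d → ℝ) (Cg : ℝ) : Prop :=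
  0 < Cg ∧ ∀ μ : Curve d, MemMV S.T S.V μ →
    (Continuous fun x => g x μ) ∧ ∀ x, |g x μ| ≤ Cg * (S.W x + supInt S.T S.W μ)

/-- Condition (H3.2): two-sided growth bound on `f`, with constants `C_h > 1`, `C_f > 0`. -/
def H32 (S : Setting d d₁) (f : Rd d₁ → Rd d → ℝ → Curve d → ℝ) (Ch Cf : ℝ) : Prop :=
  1 < Ch ∧ 0 < Cf ∧ ∀ μ : Curve d, MemMV S.T S.V μ → ∀ (u : Rd d₁) (x : Rd d),
    ∀ t ∈ Icc (0:ℝ) S.T,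
      S.hf (enorm' u) - Cf * (S.W x + supInt S.T S.W μ) ≤ f u x t μ ∧
      f u x t μ ≤ Ch * S.hf (enorm' u) + Cf * (S.W x + supInt S.T S.W μ)

/-- Condition (H3.3): stability of `f` and `g` under `V`-weak convergence, uniformly on balls. -/
def H33 (S : Setting d d₁) (f : Rd d₁ → Rd d → ℝ → Curve d → ℝ) (g : Rd d → Curve d → ℝ) :
    Prop :=
  ∀ (x₀ : Rd d) (r : ℝ) (u₀ : Rd d₁) (r₁ : ℝ), ∀ R > (0:ℝ), ∀ M ≥ (0:ℝ),
    ∀ (μn : ℕ → Curve d) (μ : Curve d),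
      (∀ n, MemMRM S.T S.V R M (μn n)) → MemMRM S.T S.V R M μ → VWeakConv S.T S.V μn μ →
      (∀ ε > (0:ℝ), ∃ N : ℕ, ∀ n ≥ N, ∀ x ∈ Metric.ball x₀ r, |g x (μn n) - g x μ| < ε) ∧
      (∀ t ∈ Icc (0:ℝ) S.T, ∀ ε > (0:ℝ), ∃ N : ℕ, ∀ n ≥ N, ∀ x ∈ Metric.ball x₀ r,
        ∀ u ∈ Metric.ball u₀ r₁ ∩ S.U, |f u x t (μn n) - f u x t μ| < ε)

/-- Condition (H3.4): convexity of `f` in `u` and joint continuity in `(u,x)`. -/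
def H34 (S : Setting d d₁) (f : Rd d₁ → Rd d → ℝ → Curve d → ℝ) : Prop :=
  ∀ μ : Curve d, MemMV S.T S.V μ → ∀ t ∈ Icc (0:ℝ) S.T,
    (∀ x : Rd d, ConvexOn ℝ S.U fun u => f u x t μ) ∧
    ContinuousOn (fun p : Rd d₁ × Rd d => f p.1 p.2 t μ) (S.U ×ˢ (univ : Set (Rd d)))

/-- `f` and `g` are Borel functions. -/
def HMeasfg (S : Setting d d₁) (f : Rd d₁ → Rd d → ℝ → Curve d → ℝ)
    (g : Rd d → Curve d → ℝ) : Prop :=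
  ∀ μ : Curve d, MemMV S.T S.V μ →
    (Measurable fun p : Rd d₁ × Rd d × ℝ => f p.1 p.2.1 p.2.2 μ) ∧ (Measurable fun x => g x μ)

/-- Condition (H3). -/
def H3 (S : Setting d d₁) (f : Rd d₁ → Rd d → ℝ → Curve d → ℝ) (g : Rd d → Curve d → ℝ)
    (Ch Cf Cg : ℝ) : Prop :=
  H31 S g Cg ∧ H32 S f Ch Cf ∧ H33 S f g ∧ H34 S f ∧ HMeasfg S f g

/-- `μ = μ_t dt` is a probability solution of the Cauchy problem
`∂_t μ_t = L*_{σ,u(x,t)} μ_t`, `μ_0 = ν`. -/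
def SolvesFPK (S : Setting d d₁) (c : Coeffs d d₁) (σ : Curve d)
    (u : Rd d → ℝ → Rd d₁) (ν : Measure (Rd d)) (μ : Curve d) : Prop :=
  IsMeasCurve S.T μ ∧ μ 0 = ν ∧
  ∀ ψ : Rd d → ℝ, IsTest ψ → ∀ t ∈ Icc (0:ℝ) S.T,
    (∀ s ∈ Icc (0:ℝ) S.T, Integrable (fun x => LopU c σ (u x s) ψ x s) (μ s)) ∧
    IntervalIntegrable (fun s => ∫ x, LopU c σ (u x s) ψ x s ∂ μ s) volume 0 t ∧
    (∫ x, ψ x ∂ μ t) - (∫ x, ψ x ∂ ν) = ∫ s in (0:ℝ)..t, ∫ x, LopU c σ (u x s) ψ x s ∂ μ s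

/-- The space `U × ℝ^d × [0,T]` on which the relaxed controls live. -/
abbrev PSpace (d d₁ : ℕ) := Rd d₁ × Rd d × ℝ

/-- The class `P_R` (with `M = 5 C_L` and `γ = e^{-C_L T}/4`). -/
def MemPR (S : Setting d d₁) (CL R : ℝ) (P : Measure (PSpace d d₁)) : Prop :=
  P univ = ENNReal.ofReal S.T ∧
  P {p : PSpace d d₁ | ¬(p.1 ∈ S.U ∧ p.2.2 ∈ Icc (0:ℝ) S.T)} = 0 ∧
  (∀ t ∈ Icc (0:ℝ) S.T,
    (∫⁻ p in {p : PSpace d d₁ | p.2.2 ≤ t}, ENNReal.ofReal (S.V p.2.1) ∂P)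
      ≤ ENNReal.ofReal (R * Real.exp (5 * CL * t))) ∧
  (∫⁻ p, ENNReal.ofReal (S.hf (enorm' p.1)) ∂P) ≤
    ENNReal.ofReal (Real.exp (-(CL * S.T)) / 4 * R)

/-- `P ∈ S_R(σ)` with the explicit curve `μ = μ_t dt` as its `(x,t)`-projection. -/
def MemSRwith (S : Setting d d₁) (c : Coeffs d d₁) (CL : ℝ) (ν : Measure (Rd d)) (R : ℝ)
    (σ : Curve d) (P : Measure (PSpace d d₁)) (μ : Curve d) : Prop :=
  MemPR S CL R P ∧ IsMeasCurve S.T μ ∧ μ 0 = ν ∧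
  P.map (fun p : PSpace d d₁ => (p.2.1, p.2.2)) = curveMeasure S.T μ ∧
  ∀ ψ : Rd d → ℝ, IsTest ψ → ∀ t ∈ Icc (0:ℝ) S.T,
    Integrable (fun p : PSpace d d₁ => LopU c σ p.1 ψ p.2.1 p.2.2)
      (P.restrict {p : PSpace d d₁ | p.2.2 ≤ t}) ∧
    (∫ x, ψ x ∂ μ t) = (∫ x, ψ x ∂ ν) +
      ∫ p in {p : PSpace d d₁ | p.2.2 ≤ t}, LopU c σ p.1 ψ p.2.1 p.2.2 ∂P

/-- The class `S_R(σ)`. -/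
def MemSR (S : Setting d d₁) (c : Coeffs d d₁) (CL : ℝ) (ν : Measure (Rd d)) (R : ℝ)
    (σ : Curve d) (P : Measure (PSpace d d₁)) : Prop :=
  ∃ μ : Curve d, MemSRwith S c CL ν R σ P μ

/-- The measure `δ_{u(x,t)}(du) μ_t(dx) dt` on `U × ℝ^d × [0,T]`. -/
def diracCtrl (S : Setting d d₁) (u : Rd d → ℝ → Rd d₁) (μ : Curve d) :
    Measure (PSpace d d₁) :=
  (curveMeasure S.T μ).map (fun q : Rd d × ℝ => (u q.1 q.2, q.1, q.2))

/-- The cost functional `F_θ(Γ) = ∫ f(u,x,t,θ) dΓ + ∫ g(x,θ) dη_T`, where `η_t dt`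
is the `(x,t)`-projection of `Γ`, given by the curve `η`. -/
def Ffun (S : Setting d d₁) (f : Rd d₁ → Rd d → ℝ → Curve d → ℝ) (g : Rd d → Curve d → ℝ)
    (θ : Curve d) (P : Measure (PSpace d d₁)) (η : Curve d) : ℝ :=
  (∫ p : PSpace d d₁, f p.1 p.2.1 p.2.2 θ ∂P) + ∫ x, g x θ ∂ η S.T


open ProbabilityTheory
open scoped ENNReal

/-- Auxiliary: the integral of `ζ ∘ fst` against `curveMeasure T ν` equals the iterated
integral of a measurable, bounded function `J` agreeing with `t ↦ ∫ ζ ∂ν t` on `[0,T]`. -/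
lemma curveMeasure_integral_aux {d : ℕ} (T : ℝ) (hT : 0 < T) (ζ : Rd d → ℝ)
    (hζ : Continuous ζ) (V : Rd d → ℝ) (C R : ℝ) (hC : 0 ≤ C) (hCR : 0 ≤ C * R)
    (hζV : ∀ x, |ζ x| ≤ C * V x) (ν : Curve d)
    (hprob : ∀ t ∈ Icc (0:ℝ) T, IsProbabilityMeasure (ν t))
    (hmeas : ∀ E : Set (Rd d), MeasurableSet E → Measurable fun t => ν t E)
    (hVint : ∀ t ∈ Icc (0:ℝ) T, Integrable V (ν t))
    (hVR : ∀ t ∈ Icc (0:ℝ) T, ∫ x, V x ∂ ν t ≤ R) :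
    ∃ J : ℝ → ℝ, Measurable J ∧ (∀ t, |J t| ≤ C * R) ∧
      (∀ t ∈ Icc (0:ℝ) T, J t = ∫ x, ζ x ∂ ν t) ∧
      ∫ q : Rd d × ℝ, ζ q.1 ∂ curveMeasure T ν = ∫ t in Icc (0:ℝ) T, J t := by
  have h0 : (0:ℝ) ∈ Icc (0:ℝ) T := ⟨le_refl _, hT.le⟩
  set ν' : ℝ → Measure (Rd d) := fun t => if t ∈ Icc (0:ℝ) T then ν t else ν 0 with hν'def
  have hν'eq : ∀ t ∈ Icc (0:ℝ) T, ν' t = ν t := fun t ht => if_pos ht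
  have hprob' : ∀ t, IsProbabilityMeasure (ν' t) := by
    intro t
    by_cases ht : t ∈ Icc (0:ℝ) T
    · rw [hν'eq t ht]; exact hprob t ht
    · show IsProbabilityMeasure (if t ∈ Icc (0:ℝ) T then ν t else ν 0)
      rw [if_neg ht]; exact hprob 0 h0
  have hmeas' : ∀ E : Set (Rd d), MeasurableSet E → Measurable fun t => ν' t E := by
    intro E hE
    have heq : (fun t => ν' t E) = fun t => if t ∈ Icc (0:ℝ) T then ν t E else ν 0 E := by
      funext t
      show (if t ∈ Icc (0:ℝ) T then ν t else ν 0) E = _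
      split <;> rfl
    rw [heq]
    exact Measurable.ite measurableSet_Icc (hmeas E hE) measurable_const
  let κ : Kernel ℝ (Rd d) := ⟨ν', Measure.measurable_measure.2 fun E hE => hmeas' E hE⟩
  haveI : IsMarkovKernel κ := ⟨fun t => hprob' t⟩
  have hmap : ∀ t : ℝ, Measurable fun x : Rd d => (x, t) :=
    fun t => measurable_id.prodMk measurable_const
  have hK : Measurable fun t => (ν' t).map (fun x => (x, t)) := by
    refine Measure.measurable_measure.2 fun S hS => ?_
    have heq : (fun t => (ν' t).map (fun x => (x, t)) S)
        = fun t => κ t ((fun x => (x, t)) ⁻¹' S) := by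
      funext t; rw [Measure.map_apply (hmap t) hS]; rfl
    rw [heq]
    exact Kernel.measurable_kernel_prodMk_right hS
  set m : Measure ℝ := volume.restrict (Icc (0:ℝ) T) with hm
  haveI : IsFiniteMeasure m := by
    constructor
    rw [hm, Measure.restrict_apply_univ, Real.volume_Icc]
    exact ENNReal.ofReal_lt_top
  have hbind : curveMeasure T ν = Measure.bind m (fun t => (ν' t).map (fun x => (x, t))) := by
    have hae : (fun t => (ν t).map (fun x => (x, t)))
        =ᵐ[m] fun t => (ν' t).map (fun x => (x, t)) := by
      filter_upwards [self_mem_ae_restrict measurableSet_Icc] with t ht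
      rw [hν'eq t ht]
    exact congrArg Measure.join (Measure.map_congr hae)
  have hVint' : ∀ t, Integrable V (ν' t) := by
    intro t
    by_cases ht : t ∈ Icc (0:ℝ) T
    · rw [hν'eq t ht]; exact hVint t ht
    · show Integrable V (if t ∈ Icc (0:ℝ) T then ν t else ν 0)
      rw [if_neg ht]; exact hVint 0 h0
  have hVR' : ∀ t, ∫ x, V x ∂ ν' t ≤ R := by
    intro t
    by_cases ht : t ∈ Icc (0:ℝ) T
    · rw [hν'eq t ht]; exact hVR t ht
    · show ∫ x, V x ∂ (if t ∈ Icc (0:ℝ) T then ν t else ν 0) ≤ R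
      rw [if_neg ht]; exact hVR 0 h0
  have hζint : ∀ t, Integrable ζ (ν' t) := fun t =>
    ((hVint' t).const_mul C).mono' hζ.aestronglyMeasurable
      (Eventually.of_forall fun x => by simpa [Real.norm_eq_abs] using hζV x)
  have habs : ∀ t, ∫ x, |ζ x| ∂ ν' t ≤ C * R := by
    intro t
    calc ∫ x, |ζ x| ∂ ν' t ≤ ∫ x, C * V x ∂ ν' t :=
          integral_mono (hζint t).abs ((hVint' t).const_mul C) hζV
      _ = C * ∫ x, V x ∂ ν' t := integral_const_mul C V
      _ ≤ C * R := mul_le_mul_of_nonneg_left (hVR' t) hC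
  set P : ℝ → ℝ≥0∞ := fun t => ∫⁻ x, ENNReal.ofReal (ζ x) ∂ ν' t with hPdef
  set N : ℝ → ℝ≥0∞ := fun t => ∫⁻ x, ENNReal.ofReal (-ζ x) ∂ ν' t with hNdef
  have hPm : Measurable P :=
    Measurable.lintegral_kernel (κ := κ) (ENNReal.measurable_ofReal.comp hζ.measurable)
  have hNm : Measurable N :=
    Measurable.lintegral_kernel (κ := κ) (ENNReal.measurable_ofReal.comp hζ.measurable.neg)
  have hbound : ∀ (g : Rd d → ℝ), (∀ x, g x ≤ |ζ x|) →
      ∀ t, ∫⁻ x, ENNReal.ofReal (g x) ∂ ν' t ≤ ENNReal.ofReal (C * R) := by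
    intro g hg t
    calc ∫⁻ x, ENNReal.ofReal (g x) ∂ ν' t ≤ ∫⁻ x, ENNReal.ofReal |ζ x| ∂ ν' t :=
          lintegral_mono fun x => ENNReal.ofReal_le_ofReal (hg x)
      _ = ENNReal.ofReal (∫ x, |ζ x| ∂ ν' t) :=
          (ofReal_integral_eq_lintegral_ofReal (hζint t).abs
            (Eventually.of_forall fun x => abs_nonneg _)).symm
      _ ≤ ENNReal.ofReal (C * R) := ENNReal.ofReal_le_ofReal (habs t)
  have hPle : ∀ t, P t ≤ ENNReal.ofReal (C * R) := hbound ζ (fun x => le_abs_self _)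
  have hNle : ∀ t, N t ≤ ENNReal.ofReal (C * R) := hbound (fun x => -ζ x) (fun x => neg_le_abs _)
  refine ⟨fun t => (P t).toReal - (N t).toReal,
    hPm.ennreal_toReal.sub hNm.ennreal_toReal, ?_, ?_, ?_⟩
  · intro t
    show |(P t).toReal - (N t).toReal| ≤ C * R
    have h1 : (P t).toReal ≤ C * R := ENNReal.toReal_le_of_le_ofReal hCR (hPle t)
    have h2 : (N t).toReal ≤ C * R := ENNReal.toReal_le_of_le_ofReal hCR (hNle t)
    have h3 : 0 ≤ (P t).toReal := ENNReal.toReal_nonneg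
    have h4 : 0 ≤ (N t).toReal := ENNReal.toReal_nonneg
    rw [abs_le]; constructor <;> linarith
  · intro t ht
    rw [← hν'eq t ht]
    exact (integral_eq_lintegral_pos_part_sub_lintegral_neg_part (hζint t)).symm
  · -- the main identity
    set M : Measure (Rd d × ℝ) := Measure.bind m (fun t => (ν' t).map (fun x => (x, t)))
      with hMdef
    have hbm : ∀ (f : Rd d × ℝ → ℝ≥0∞), Measurable f →
        ∫⁻ q, f q ∂ M = ∫⁻ t, ∫⁻ x, f (x, t) ∂ ν' t ∂ m := by
      intro f hf
      rw [hMdef, Measure.lintegral_bind hK.aemeasurable hf.aemeasurable]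
      refine lintegral_congr fun t => ?_
      rw [lintegral_map hf (hmap t)]
    have hgm : Measurable fun q : Rd d × ℝ => ζ q.1 := hζ.measurable.comp measurable_fst
    have hgint : Integrable (fun q : Rd d × ℝ => ζ q.1) M := by
      refine ⟨(hζ.comp continuous_fst).aestronglyMeasurable, ?_⟩
      rw [hasFiniteIntegral_iff_norm,
        hbm (fun q => ENNReal.ofReal ‖ζ q.1‖) (ENNReal.measurable_ofReal.comp hgm.norm)]
      calc ∫⁻ t, ∫⁻ x, ENNReal.ofReal ‖ζ x‖ ∂ ν' t ∂ m
          ≤ ∫⁻ _, ENNReal.ofReal (C * R) ∂ m := by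
            refine lintegral_mono fun t => ?_
            simpa [Real.norm_eq_abs] using hbound (fun x => |ζ x|) (fun x => le_refl _) t
        _ = ENNReal.ofReal (C * R) * m univ := lintegral_const _
        _ < ∞ := ENNReal.mul_lt_top ENNReal.ofReal_lt_top (measure_lt_top m univ)
    have hPint : Integrable (fun t => (P t).toReal) m := by
      refine (integrable_const (C * R)).mono' hPm.ennreal_toReal.aestronglyMeasurable
        (Eventually.of_forall fun t => ?_)
      rw [Real.norm_eq_abs, abs_of_nonneg ENNReal.toReal_nonneg]
      exact ENNReal.toReal_le_of_le_ofReal hCR (hPle t)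
    have hNint : Integrable (fun t => (N t).toReal) m := by
      refine (integrable_const (C * R)).mono' hNm.ennreal_toReal.aestronglyMeasurable
        (Eventually.of_forall fun t => ?_)
      rw [Real.norm_eq_abs, abs_of_nonneg ENNReal.toReal_nonneg]
      exact ENNReal.toReal_le_of_le_ofReal hCR (hNle t)
    have hPfin : ∀ᵐ t ∂ m, P t < ∞ :=
      Eventually.of_forall fun t => lt_of_le_of_lt (hPle t) ENNReal.ofReal_lt_top
    have hNfin : ∀ᵐ t ∂ m, N t < ∞ :=
      Eventually.of_forall fun t => lt_of_le_of_lt (hNle t) ENNReal.ofReal_lt_top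
    calc ∫ q : Rd d × ℝ, ζ q.1 ∂ curveMeasure T ν = ∫ q : Rd d × ℝ, ζ q.1 ∂ M := by
          rw [hbind]
      _ = (∫⁻ q, ENNReal.ofReal (ζ q.1) ∂ M).toReal
            - (∫⁻ q, ENNReal.ofReal (-ζ q.1) ∂ M).toReal :=
          integral_eq_lintegral_pos_part_sub_lintegral_neg_part hgint
      _ = (∫⁻ t, P t ∂ m).toReal - (∫⁻ t, N t ∂ m).toReal := by
          rw [hbm (fun q => ENNReal.ofReal (ζ q.1)) (ENNReal.measurable_ofReal.comp hgm),
            hbm (fun q => ENNReal.ofReal (-ζ q.1)) (ENNReal.measurable_ofReal.comp hgm.neg)]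
      _ = (∫ t, (P t).toReal ∂ m) - ∫ t, (N t).toReal ∂ m := by
          rw [integral_toReal hPm.aemeasurable hPfin, integral_toReal hNm.aemeasurable hNfin]
      _ = ∫ t in Icc (0:ℝ) T, ((P t).toReal - (N t).toReal) := (integral_sub hPint hNint).symm

/-- Example 2.4: with `V(x) = (1+|x|²)^{s/2}`, `s ≥ 1`, if `Φ(x,t,r)` is Borel and continuous
in `(x,r)` for each `t`, `ζ` is continuous with `ζ/V → 0` at infinity, and
`φ(x,t,μ) = Φ(x,t, ∫_0^T ∫ ζ dμ_τ dτ)`, then `V`-weak convergence `μⁿ → μ` in `M_R(V)`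
implies `sup_{x ∈ B} |φ(x,t,μⁿ) − φ(x,t,μ)| → 0` for every `t ∈ [0,T]` and every ball `B`. -/

theorem example_four {d : ℕ} (T : ℝ) (hT : 0 < T) (s : ℝ) (hs : 1 ≤ s)
    (Φ : Rd d → ℝ → ℝ → ℝ)
    (hΦmeas : Measurable fun q : (Rd d × ℝ) × ℝ => Φ q.1.1 q.1.2 q.2)
    (hΦcont : ∀ t ∈ Icc (0:ℝ) T, Continuous fun q : Rd d × ℝ => Φ q.1 t q.2)
    (ζ : Rd d → ℝ) (hζ : Continuous ζ)
    (hζV : Tendsto (fun x => ζ x / ((1 + enorm' x ^ 2) ^ (s / 2)))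
      (cocompact (Rd d)) (𝓝 0))
    (R : ℝ) (hR : 0 < R)
    (μn : ℕ → Curve d) (μ : Curve d)
    (hμn : ∀ n, MemMRM T (fun x => (1 + enorm' x ^ 2) ^ (s / 2)) R 0 (μn n))
    (hμ : MemMRM T (fun x => (1 + enorm' x ^ 2) ^ (s / 2)) R 0 μ)
    (hconv : VWeakConv T (fun x => (1 + enorm' x ^ 2) ^ (s / 2)) μn μ) :
    ∀ t ∈ Icc (0:ℝ) T, ∀ (x₀ : Rd d) (r : ℝ), ∀ ε > (0:ℝ), ∃ N : ℕ, ∀ n ≥ N,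
      ∀ x ∈ Metric.ball x₀ r,
        |Φ x t (∫ q : Rd d × ℝ, ζ q.1 ∂ curveMeasure T (μn n))
          - Φ x t (∫ q : Rd d × ℝ, ζ q.1 ∂ curveMeasure T μ)| < ε := by
  classical
  intro t ht x₀ r ε hε
  set V : Rd d → ℝ := fun x => (1 + enorm' x ^ 2) ^ (s / 2) with hVdef
  have hV1 : ∀ x, 1 ≤ V x := by
    intro x
    have h1 : (1:ℝ) ≤ 1 + enorm' x ^ 2 := le_add_of_nonneg_right (sq_nonneg _)
    calc (1:ℝ) = 1 ^ (s / 2) := (Real.one_rpow _).symm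
      _ ≤ (1 + enorm' x ^ 2) ^ (s / 2) := Real.rpow_le_rpow zero_le_one h1 (by linarith)
  -- a multiplicative bound for ζ
  obtain ⟨C, hC, hζb⟩ : ∃ C : ℝ, 0 < C ∧ ∀ x, |ζ x| ≤ C * V x := by
    have h1 : {x : Rd d | |ζ x / V x| < 1} ∈ cocompact (Rd d) := by
      have h2 := hζV (Metric.ball_mem_nhds (0:ℝ) one_pos)
      refine mem_of_superset h2 ?_
      intro x hx
      rw [mem_preimage, Metric.mem_ball, Real.dist_eq, sub_zero] at hx
      exact hx
    obtain ⟨K, hKc, hKs⟩ := mem_cocompact.1 h1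
    obtain ⟨C0, hC0⟩ := hKc.exists_bound_of_continuousOn hζ.continuousOn
    refine ⟨max C0 1, lt_of_lt_of_le one_pos (le_max_right _ _), fun x => ?_⟩
    by_cases hx : x ∈ K
    · calc |ζ x| ≤ C0 := by simpa [Real.norm_eq_abs] using hC0 x hx
        _ ≤ max C0 1 := le_max_left _ _
        _ ≤ max C0 1 * V x :=
            le_mul_of_one_le_right (le_trans zero_le_one (le_max_right _ _)) (hV1 x)
    · have h2 : |ζ x / V x| < 1 := hKs hx
      have hVpos : 0 < V x := lt_of_lt_of_le one_pos (hV1 x)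
      rw [abs_div, abs_of_pos hVpos, div_lt_one hVpos] at h2
      calc |ζ x| ≤ V x := h2.le
        _ = 1 * V x := (one_mul _).symm
        _ ≤ max C0 1 * V x := mul_le_mul_of_nonneg_right (le_max_right _ _) hVpos.le
  have hCR : 0 ≤ C * R := le_of_lt (mul_pos hC hR)
  -- apply the auxiliary lemma to each curve
  have hkey : ∀ ν : Curve d, MemMRM T V R 0 ν →
      ∃ J : ℝ → ℝ, Measurable J ∧ (∀ τ, |J τ| ≤ C * R) ∧
        (∀ τ ∈ Icc (0:ℝ) T, J τ = ∫ x, ζ x ∂ ν τ) ∧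
        ∫ q : Rd d × ℝ, ζ q.1 ∂ curveMeasure T ν = ∫ τ in Icc (0:ℝ) T, J τ := by
    intro ν hν
    refine curveMeasure_integral_aux T hT ζ hζ V C R hC.le hCR hζb ν
      hν.1.1.1 hν.1.1.2.1 hν.1.2.1 fun τ hτ => ?_
    have := hν.2 τ hτ
    simpa using this
  obtain ⟨J0, hJ0m, hJ0b, hJ0eq, hJ0int⟩ := hkey μ hμ
  choose Jn hJnm hJnb hJneq hJnint using fun n => hkey (μn n) (hμn n)
  haveI : IsFiniteMeasure (volume.restrict (Icc (0:ℝ) T)) := by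
    constructor
    rw [Measure.restrict_apply_univ, Real.volume_Icc]
    exact ENNReal.ofReal_lt_top
  -- convergence of the integrals
  have hA : Tendsto (fun n => ∫ q : Rd d × ℝ, ζ q.1 ∂ curveMeasure T (μn n)) atTop
      (𝓝 (∫ q : Rd d × ℝ, ζ q.1 ∂ curveMeasure T μ)) := by
    rw [hJ0int]
    have htend : Tendsto (fun n => ∫ τ in Icc (0:ℝ) T, Jn n τ) atTop
        (𝓝 (∫ τ in Icc (0:ℝ) T, J0 τ)) := by
      refine tendsto_integral_of_dominated_convergence (fun _ => C * R)
        (fun n => (hJnm n).aestronglyMeasurable) (integrable_const _)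
        (fun n => Eventually.of_forall fun τ => by
          simpa [Real.norm_eq_abs] using hJnb n τ) ?_
      filter_upwards [self_mem_ae_restrict measurableSet_Icc] with τ hτ
      rw [hJ0eq τ hτ]
      refine (hconv τ hτ ζ hζ hζV).congr' ?_
      exact Eventually.of_forall fun n => (hJneq n τ hτ).symm
    refine htend.congr fun n => (hJnint n).symm
  -- uniform continuity of Φ on a compact product
  set a : ℝ := ∫ q : Rd d × ℝ, ζ q.1 ∂ curveMeasure T μ with hadef
  have hcont := hΦcont t ht
  have hKcomp : IsCompact ((Metric.closedBall x₀ r) ×ˢ Icc (a - 1) (a + 1)) :=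
    (isCompact_closedBall x₀ r).prod isCompact_Icc
  have hUC := hKcomp.uniformContinuousOn_of_continuous hcont.continuousOn
  rw [Metric.uniformContinuousOn_iff] at hUC
  obtain ⟨δ, hδ, hδ'⟩ := hUC ε hε
  obtain ⟨N, hN⟩ := Metric.tendsto_atTop.1 hA (min δ 1) (lt_min hδ one_pos)

  refine ⟨N, fun n hn x hx => ?_⟩
  have hd := hN n hn
  rw [Real.dist_eq] at hd
  set an : ℝ := ∫ q : Rd d × ℝ, ζ q.1 ∂ curveMeasure T (μn n) with handef
  have hd1 : |an - a| < δ := lt_of_lt_of_le hd (min_le_left _ _)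
  have hd2 : |an - a| < 1 := lt_of_lt_of_le hd (min_le_right _ _)
  have habs := abs_lt.1 hd2
  have hx' : x ∈ Metric.closedBall x₀ r := Metric.ball_subset_closedBall hx
  have h1 : (x, an) ∈ (Metric.closedBall x₀ r) ×ˢ Icc (a - 1) (a + 1) :=
    ⟨hx', ⟨by linarith [habs.1], by linarith [habs.2]⟩⟩
  have h2 : (x, a) ∈ (Metric.closedBall x₀ r) ×ˢ Icc (a - 1) (a + 1) :=
    ⟨hx', ⟨by linarith, by linarith⟩⟩
  have hdist : dist ((x, an) : Rd d × ℝ) (x, a) < δ := by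
    rw [Prod.dist_eq]
    simp only [dist_self, Real.dist_eq]
    exact max_lt hδ hd1
  have := hδ' (x, an) h1 (x, a) h2 hdist
  rw [Real.dist_eq] at this
  exact this

end MFG
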